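/- Let A be a feasible Steiner forest with components A_1,…,A_p numbered by nondecreasing width, and let C=(e_1,…,e_{|C|}) be a guarded circuit in G_A visiting nodes v_1,…,v_{|C|+1}=v_1, where v_1 ≥ v_i for all i, the distinct visited nodes are ξ_1 > ξ_2 > … > ξ_s (so v_1=ξ_1), and n_ℓ is the number of times C visits ξ_ℓ. Suppose A is c-approximate connecting move optimal and there exists a set 𝔐 of trees in G_A such that (1) the trees in 𝔐 are edge-disjoint and use only edges of C, and (2) for each ℓ ∈ {2,…,s} at least n_ℓ trees of 𝔐 pay for ξ_ℓ. Then Σ_{i=2}^{|C|} w(A_{v_i}) = Σ_{ℓ=2}^{s} n_ℓ·w(A_{ξ_ℓ}) ≤ c·Σ_{i=1}^{|C|} d_{e_i} = c·d(C). -/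

import Mathlib

open Finset

attribute [local instance] Classical.propDecidable

variable {V : Type*} [Fintype V] [DecidableEq V]

/-- The simple graph on `V` induced by a finite set of (undirected) edges. -/
def graphOf (F : Finset (Sym2 V)) : SimpleGraph V where
  Adj u v := u ≠ v ∧ s(u, v) ∈ F
  symm := by
    refine ⟨fun u v h => ?_⟩
    refine ⟨Ne.symm h.1, ?_⟩
    rw [Sym2.eq_swap]
    exact h.2
  loopless := by refine ⟨fun v h => ?_⟩; exact h.1 rfl

/-- The set of vertices incident to at least one edge of `F` (denoted `V[F]` in the paper). -/
def supp (F : Finset (Sym2 V)) : Set V := {v | ∃ e ∈ F, v ∈ e}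

/-- A Steiner forest `F` is feasible for the terminal pairs `T` if it connects every pair. -/
def Feasible (F : Finset (Sym2 V)) (T : Finset (V × V)) : Prop :=
  ∀ p ∈ T, (graphOf F).Reachable p.1 p.2

/-- Total edge cost `d(F)`. -/
def cost (d : Sym2 V → ℝ) (F : Finset (Sym2 V)) : ℝ := ∑ e ∈ F, d e

/-- `A` is a tree (on its vertex support): loopless edges, acyclic, connected on `V[A]`. -/
def IsTreeSol (A : Finset (Sym2 V)) : Prop :=
  (∀ e ∈ A, ¬ e.IsDiag) ∧ (graphOf A).IsAcyclic ∧
    ∀ u ∈ supp A, ∀ v ∈ supp A, (graphOf A).Reachable u v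

/-- Shortest-path distance between `u` and `v` in the graph with edge set `Eall`
and edge lengths `d`. -/
noncomputable def wdist (Eall : Finset (Sym2 V)) (d : Sym2 V → ℝ) (u v : V) : ℝ :=
  ⨅ p : (graphOf Eall).Walk u v, (p.edges.map d).sum

/-- Width of a vertex set `W`: the largest shortest-path distance of a terminal pair
whose two members both lie in `W`. -/
noncomputable def widthSet (Eall : Finset (Sym2 V)) (d : Sym2 V → ℝ) (T : Finset (V × V))
    (W : Set V) : ℝ :=
  sSup {x : ℝ | ∃ p ∈ T, p.1 ∈ W ∧ p.2 ∈ W ∧ x = wdist Eall d p.1 p.2}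

/-- Total width `w(F)`: the sum of the widths of the connected components of `F`. -/
noncomputable def totalWidth (Eall : Finset (Sym2 V)) (d : Sym2 V → ℝ) (T : Finset (V × V))
    (F : Finset (Sym2 V)) : ℝ :=
  ∑ᶠ c : (graphOf F).ConnectedComponent, widthSet Eall d T c.supp

/-- The potential `φ(F) = d(F) + w(F)`. -/
noncomputable def phi (Eall : Finset (Sym2 V)) (d : Sym2 V → ℝ) (T : Finset (V × V))
    (F : Finset (Sym2 V)) : ℝ :=
  cost d F + totalWidth Eall d T F

/-- Some edge of `F` leaves the vertex set `W`. -/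
def leavesSet (F : Finset (Sym2 V)) (W : Set V) : Prop :=
  ∃ g ∈ F, ∃ x y : V, g = s(x, y) ∧ x ∈ W ∧ y ∉ W

/-- `T_{e,f}`: the connected component of `A ∖ {e,f}` containing the interior of the
unique `e`–`f` path of the tree `A`; equivalently, the component containing an endpoint
of `e` together with an endpoint of `f`. -/
def midComp (A : Finset (Sym2 V)) (e f : Sym2 V) : Set V :=
  {v | ∃ x ∈ e, ∃ y ∈ f,
    (graphOf (A \ {e, f})).Reachable x y ∧ (graphOf (A \ {e, f})).Reachable x v}

/-- `e` and `f` are compatible w.r.t. `F` (`e ~cp f`). -/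
def Compatible (A F : Finset (Sym2 V)) (e f : Sym2 V) : Prop :=
  e = f ∨ ¬ leavesSet F (midComp A e f)

/-- `e` is safe: some `F`-edge crosses between the two components of `A ∖ {e}`. -/
def Safe (A F : Finset (Sym2 V)) (e : Sym2 V) : Prop :=
  ∃ g ∈ F, ∃ x y : V, g = s(x, y) ∧ x ≠ y ∧ ¬ (graphOf (A.erase e)).Reachable x y

/-- `e` is essential: removing it from `A` destroys feasibility. -/
def Essential (A : Finset (Sym2 V)) (T : Finset (V × V)) (e : Sym2 V) : Prop :=
  ¬ Feasible (A.erase e) T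

/-- The compatibility class of the edge `e` of `A`. -/
noncomputable def cls (A F : Finset (Sym2 V)) (e : Sym2 V) : Finset (Sym2 V) :=
  A.filter (fun f => Compatible A F e f)

/-- `S_u`: the set of unsafe edges of `A`. -/
noncomputable def unsafeCls (A F : Finset (Sym2 V)) : Finset (Sym2 V) :=
  A.filter (fun e => ¬ Safe A F e)

/-- `𝔖`: the set of compatibility classes of edges of `A`. -/
noncomputable def classes (A F : Finset (Sym2 V)) : Finset (Finset (Sym2 V)) :=
  A.image (cls A F)

/-- `e` lies on the fundamental cycle closed by adding the edge `f` to the tree `A`. -/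
def onFundCycle (A : Finset (Sym2 V)) (f e : Sym2 V) : Prop :=
  e ∈ A ∧ ∀ x y : V, f = s(x, y) →
    (graphOf A).Reachable x y ∧ ¬ (graphOf (A.erase e)).Reachable x y

/-- Edge/edge swap optimality of `A` w.r.t. added edges from `Eadd` and objective `obj`:
no swap that adds an edge `f ∈ Eadd` and removes one edge of the cycle it closes,
keeping feasibility, strictly decreases the objective. -/
def EdgeEdgeSwapOptimal (Eadd : Finset (Sym2 V)) (T : Finset (V × V))
    (obj : Finset (Sym2 V) → ℝ) (A : Finset (Sym2 V)) : Prop :=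
  ∀ f ∈ Eadd, ∀ e, onFundCycle A f e →
    Feasible (A.erase e ∪ {f}) T → obj A ≤ obj (A.erase e ∪ {f})

/-- Edge/set swap optimality of `A` w.r.t. added edges from `Eadd` and objective `obj`:
no swap that adds an edge `f ∈ Eadd` and removes a set `S` of edges of the cycle it closes,
keeping feasibility, strictly decreases the objective. -/
def EdgeSetSwapOptimal (Eadd : Finset (Sym2 V)) (T : Finset (V × V))
    (obj : Finset (Sym2 V) → ℝ) (A : Finset (Sym2 V)) : Prop :=
  ∀ f ∈ Eadd, ∀ S ⊆ A, (∀ e ∈ S, onFundCycle A f e) →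
    Feasible ((A \ S) ∪ {f}) T → obj A ≤ obj ((A \ S) ∪ {f})

/-- Removing swap optimality: deleting any (feasibility preserving) edge set from `A`
does not strictly decrease the objective. -/
def RemovingSwapOptimal (T : Finset (V × V))
    (obj : Finset (Sym2 V) → ℝ) (A : Finset (Sym2 V)) : Prop :=
  ∀ S ⊆ A, Feasible (A \ S) T → obj A ≤ obj (A \ S)

/-- Path/set swap optimality of `A`: for vertices `u, v` in the same component of `A`,
adding a set `P ⊆ Eadd` of edges (along a `u`–`v` connection) and removing a set `S` of
edges of the component of `u`, in a way that keeps `u,v` connected and the solution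
feasible, does not strictly decrease the objective. -/
def PathSetSwapOptimal (Eadd : Finset (Sym2 V)) (T : Finset (V × V))
    (obj : Finset (Sym2 V) → ℝ) (A : Finset (Sym2 V)) : Prop :=
  ∀ u v : V, (graphOf A).Reachable u v →
    ∀ P : Finset (Sym2 V), P ⊆ Eadd → ∀ S ⊆ A,
      (∀ e ∈ S, ∃ x ∈ e, (graphOf A).Reachable u x) →
      (graphOf ((A \ S) ∪ P)).Reachable u v →
      Feasible ((A \ S) ∪ P) T → obj A ≤ obj ((A \ S) ∪ P)

/-- A connected component `c` of `A ∖ S` is an *inner* component for the class `S`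
if it touches (at least) two distinct edges of `S`. -/
def innerComp (A S : Finset (Sym2 V)) (c : (graphOf (A \ S)).ConnectedComponent) : Prop :=
  ∃ e ∈ S, ∃ e' ∈ S, e ≠ e' ∧ (∃ x ∈ e, (graphOf (A \ S)).connectedComponentMk x = c) ∧
    ∃ y ∈ e', (graphOf (A \ S)).connectedComponentMk y = c

/-- The sum of the widths of the inner components `E_{S,i}`, `i ∈ In_S`, of the class `S`. -/
noncomputable def innerWidthSum (Eall : Finset (Sym2 V)) (d : Sym2 V → ℝ) (T : Finset (V × V))
    (A S : Finset (Sym2 V)) : ℝ :=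
  ∑ᶠ c : (graphOf (A \ S)).ConnectedComponent,
    if innerComp A S c then widthSet Eall d T c.supp else 0

/-- `index(E')` for a vertex set `W`: the largest index `i` (in the enumeration `tp` of the
terminal pairs by nondecreasing distance) of a terminal pair lying entirely inside `W`. -/
noncomputable def idxOf {nt : ℕ} (tp : Fin nt → V × V) (W : Set V) : ℕ :=
  sSup {i : ℕ | ∃ h : i < nt, (tp ⟨i, h⟩).1 ∈ W ∧ (tp ⟨i, h⟩).2 ∈ W}

/-- The finite vertex support of an edge set. -/
def suppF (B : Finset (Sym2 V)) : Finset V :=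
  Finset.univ.filter (fun v => ∃ e ∈ B, v ∈ e)

/-- `e` crosses between two different connected components of `A`. -/
def crossingEdge (A : Finset (Sym2 V)) (e : Sym2 V) : Prop :=
  ∀ x y : V, e = s(x, y) → ¬ (graphOf A).Reachable x y

/-- The components of `A` touched by the edge set `B`, i.e. the nodes of `G_A`
incident to `B`. -/
noncomputable def touched (A B : Finset (Sym2 V)) :
    Finset ((graphOf A).ConnectedComponent) :=
  (suppF B).image ((graphOf A).connectedComponentMk)

/-- `B` is (the edge set of) a tree in the contracted multigraph `G_A`: all its edges cross
between components of `A`, it is connected (through the components of `A` it touches), and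
it has one edge less than the number of components it touches. -/
def IsGATree (A B : Finset (Sym2 V)) : Prop :=
  (∀ e ∈ B, crossingEdge A e) ∧ (touched A B).card = B.card + 1 ∧
    ∀ x ∈ suppF B, ∀ y ∈ suppF B, (graphOf (A ∪ B)).Reachable x y

/-- `A` is `c`-approximate connecting move optimal: for every tree `B` in `G_A` (with edges
taken from `Emoves`), the total width of the components it connects, minus the largest of
these widths, is at most `c` times the length of the tree. -/
def ConnApproxOptimal (Emoves Eall : Finset (Sym2 V)) (d : Sym2 V → ℝ) (T : Finset (V × V))
    (c : ℝ) (A : Finset (Sym2 V)) : Prop :=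
  ∀ B ⊆ Emoves, IsGATree A B →
    (∑ t ∈ touched A B, widthSet Eall d T t.supp)
      - (⨆ t ∈ touched A B, widthSet Eall d T t.supp) ≤ c * ∑ e ∈ B, d e


/-! Double counting: charge each visit of a non-maximal node `ξ` of `C` to its own tree of `𝔐`
paying for `ξ`. A tree `B` is then charged at most the total width of the nodes it pays for;
none of them is the widest node of `B`, so by connecting move optimality this is at most
`c · d(B)`. The trees are edge-disjoint sets of edges of `C`, so `Σ_B c · d(B) ≤ c · d(C)`. -/

lemma Finset.sum_filter_lt_le_sum_sub_iSup {ι : Type*} (S : Finset ι) (hS : S.Nonempty)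
    (idx : ι → ℕ) (w : ι → ℝ) (hw : ∀ i, 0 ≤ w i) (hmono : ∀ i j, idx i ≤ idx j → w i ≤ w j) :
    ∑ i ∈ S with ∃ j ∈ S, idx i < idx j, w i ≤ ∑ i ∈ S, w i - ⨆ i ∈ S, w i := by
  classical
  obtain ⟨m, hm, hmax⟩ := S.exists_max_image idx hS
  have hsub : {i ∈ S | ∃ j ∈ S, idx i < idx j} ⊆ S.erase m := fun i hi => by
    obtain ⟨hiS, j, hjS, hij⟩ := Finset.mem_filter.mp hi
    exact Finset.mem_erase.mpr ⟨fun him => by subst him; have := hmax j hjS; omega, hiS⟩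
  have hsup : ⨆ i ∈ S, w i ≤ w m :=
    Real.iSup_le (fun i => Real.iSup_le (fun hi => hmono i m (hmax i hi)) (hw m)) (hw m)
  calc ∑ i ∈ S with ∃ j ∈ S, idx i < idx j, w i
      ≤ ∑ i ∈ S.erase m, w i := Finset.sum_le_sum_of_subset_of_nonneg hsub fun i _ _ => hw i
    _ = ∑ i ∈ S, w i - w m := by rw [Finset.sum_erase_eq_sub hm]
    _ ≤ ∑ i ∈ S, w i - ⨆ i ∈ S, w i := by linarith

lemma Finset.sum_comp_le_sum_sum_of_card_fiber_le {ι κ β : Type*} [DecidableEq κ]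
    (I : Finset ι) (ℓ : ι → κ) (𝔐 : Finset β) (S : β → Finset κ) (w : κ → ℝ)
    (hw : ∀ k, 0 ≤ w k) (hcard : ∀ i ∈ I, #{j ∈ I | ℓ j = ℓ i} ≤ #{B ∈ 𝔐 | ℓ i ∈ S B}) :
    ∑ i ∈ I, w (ℓ i) ≤ ∑ B ∈ 𝔐, ∑ k ∈ S B, w k := by
  calc ∑ i ∈ I, w (ℓ i)
      = ∑ k ∈ I.image ℓ, #{j ∈ I | ℓ j = k} • w k := Finset.sum_comp w ℓ
    _ ≤ ∑ k ∈ I.image ℓ, #{B ∈ 𝔐 | k ∈ S B} • w k := by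
      refine Finset.sum_le_sum fun k hk => ?_
      obtain ⟨i, hi, rfl⟩ := Finset.mem_image.mp hk
      exact nsmul_le_nsmul_left (hw _) (hcard i hi)
    _ = ∑ k ∈ I.image ℓ, ∑ B ∈ 𝔐, if k ∈ S B then w k else 0 := by
      simp only [← Finset.sum_filter, Finset.sum_const]
    _ = ∑ B ∈ 𝔐, ∑ k ∈ I.image ℓ with k ∈ S B, w k := by
      rw [Finset.sum_comm]
      simp only [Finset.sum_filter]
    _ ≤ ∑ B ∈ 𝔐, ∑ k ∈ S B, w k :=
      Finset.sum_le_sum fun B _ => Finset.sum_le_sum_of_subset_of_nonneg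
        (fun k hk => (Finset.mem_filter.mp hk).2) fun k _ _ => hw k

lemma Finset.sum_sum_le_sum_of_pairwiseDisjoint {ι α : Type*} [DecidableEq α]
    (𝔐 : Finset (Finset α)) (hdisj : (𝔐 : Set (Finset α)).PairwiseDisjoint id)
    (I : Finset ι) (f : ι → α) (hsub : ∀ B ∈ 𝔐, B ⊆ I.image f) (d : α → ℝ)
    (hd : ∀ x, 0 ≤ d x) :
    ∑ B ∈ 𝔐, ∑ e ∈ B, d e ≤ ∑ i ∈ I, d (f i) := by
  calc ∑ B ∈ 𝔐, ∑ e ∈ B, d e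
      = ∑ e ∈ 𝔐.biUnion id, d e := (Finset.sum_biUnion hdisj).symm
    _ ≤ ∑ e ∈ I.image f, d e :=
        Finset.sum_le_sum_of_subset_of_nonneg (Finset.biUnion_subset.mpr hsub) fun e _ _ => hd e
    _ ≤ ∑ i ∈ I, d (f i) := Finset.sum_image_le_of_nonneg fun e _ => hd e

omit [Fintype V] [DecidableEq V] in
lemma wdist_nonneg (Eall : Finset (Sym2 V)) {d : Sym2 V → ℝ} (hd : ∀ e, 0 ≤ d e) (u v : V) :
    0 ≤ wdist Eall d u v :=
  Real.iInf_nonneg fun p => List.sum_nonneg fun x hx => by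
    obtain ⟨e, _, rfl⟩ := List.mem_map.mp hx
    exact hd e

omit [Fintype V] [DecidableEq V] in
lemma widthSet_nonneg (Eall : Finset (Sym2 V)) {d : Sym2 V → ℝ} (hd : ∀ e, 0 ≤ d e)
    (T : Finset (V × V)) (W : Set V) : 0 ≤ widthSet Eall d T W := by
  apply Real.sSup_nonneg
  rintro x ⟨p, _, _, _, rfl⟩
  exact wdist_nonneg Eall hd p.1 p.2

noncomputable def paidNodes (A B : Finset (Sym2 V)) (idx : (graphOf A).ConnectedComponent → ℕ) :
    Finset (graphOf A).ConnectedComponent :=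
  {t ∈ touched A B | ∃ t' ∈ touched A B, idx t < idx t'}

lemma sum_paidNodes_le_of_connApproxOptimal {Eall : Finset (Sym2 V)} {d : Sym2 V → ℝ}
    (hd : ∀ e, 0 ≤ d e) {T : Finset (V × V)} {c : ℝ} {A B : Finset (Sym2 V)}
    (hopt : ConnApproxOptimal Eall Eall d T c A) (hBE : B ⊆ Eall) (hB : IsGATree A B)
    (idx : (graphOf A).ConnectedComponent → ℕ)
    (hmono : ∀ t t', idx t ≤ idx t' → widthSet Eall d T t.supp ≤ widthSet Eall d T t'.supp) :
    ∑ t ∈ paidNodes A B idx, widthSet Eall d T t.supp ≤ c * ∑ e ∈ B, d e := by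
  have hne : (touched A B).Nonempty := by
    rw [← Finset.card_pos, hB.2.1]
    omega
  exact (Finset.sum_filter_lt_le_sum_sub_iSup _ hne idx _
    (fun t => widthSet_nonneg Eall hd T t.supp) hmono).trans (hopt B hBE hB)

section ComponentNumbering

variable {A : Finset (Sym2 V)} {ci : V → ℕ}

def componentIndex (hci : ∀ u v : V, ci u = ci v ↔ (graphOf A).Reachable u v) :
    (graphOf A).ConnectedComponent → ℕ :=
  SimpleGraph.ConnectedComponent.lift ci fun u v p _ => (hci u v).2 p.reachable

omit [Fintype V] [DecidableEq V] in
lemma le_of_componentIndex_le (hci : ∀ u v : V, ci u = ci v ↔ (graphOf A).Reachable u v)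
    {f : (graphOf A).ConnectedComponent → ℝ}
    (hmono : ∀ u v, ci u ≤ ci v →
      f ((graphOf A).connectedComponentMk u) ≤ f ((graphOf A).connectedComponentMk v))
    (t t' : (graphOf A).ConnectedComponent) (h : componentIndex hci t ≤ componentIndex hci t') :
    f t ≤ f t' := by
  induction t, t' using SimpleGraph.ConnectedComponent.ind₂ with
  | h u v => exact hmono u v h

lemma mk_mem_touched_iff (hci : ∀ u v : V, ci u = ci v ↔ (graphOf A).Reachable u v)
    (B : Finset (Sym2 V)) (u : V) :
    (graphOf A).connectedComponentMk u ∈ touched A B ↔ ∃ v ∈ suppF B, ci v = ci u := by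
  simp only [touched, Finset.mem_image, SimpleGraph.ConnectedComponent.eq, hci]

lemma mk_mem_paidNodes_iff (hci : ∀ u v : V, ci u = ci v ↔ (graphOf A).Reachable u v)
    (B : Finset (Sym2 V)) (u : V) :
    (graphOf A).connectedComponentMk u ∈ paidNodes A B (componentIndex hci) ↔
      (∃ v ∈ suppF B, ci v = ci u) ∧ ∃ v ∈ suppF B, ci u < ci v := by
  rw [paidNodes, Finset.mem_filter, mk_mem_touched_iff hci]
  simp only [touched, Finset.exists_mem_image, componentIndex,
    SimpleGraph.ConnectedComponent.lift_mk]

end ComponentNumbering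

theorem stmt16_treedecomp_to_lowerbound_general
    (Eall : Finset (Sym2 V)) (d : Sym2 V → ℝ) (hd : ∀ e, 0 ≤ d e)
    (T : Finset (V × V)) (A : Finset (Sym2 V))
    -- numbering of the components of `A` by nondecreasing width
    (ci : V → ℕ)
    (hci : ∀ u v : V, ci u = ci v ↔ (graphOf A).Reachable u v)
    (hmono : ∀ u v : V, ci u ≤ ci v →
      widthSet Eall d T ((graphOf A).connectedComponentMk u).supp ≤
        widthSet Eall d T ((graphOf A).connectedComponentMk v).supp)
    (c : ℝ) (hc : 1 ≤ c)
    (hopt : ConnApproxOptimal Eall Eall d T c A)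
    -- a guarded circuit `C` in `G_A`, edge i joining the components of `a i` and `b i`
    (n : ℕ) (hn : 0 < n) (a b : Fin n → V)
    (hedges : ∀ i, s(a i, b i) ∈ Eall)
    (hguard : ∀ i : Fin n, i ≠ ⟨0, hn⟩ → ci (a i) < ci (a ⟨0, hn⟩))
    -- the tree packing 𝔐
    (𝔐 : Finset (Finset (Sym2 V)))
    (hdisj : ∀ B ∈ 𝔐, ∀ B' ∈ 𝔐, B ≠ B' → Disjoint B B')
    (htree : ∀ B ∈ 𝔐, IsGATree A B)
    (hsubC : ∀ B ∈ 𝔐, ∀ e ∈ B, ∃ i : Fin n, e = s(a i, b i))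
    -- every node ξ other than the maximal one is paid for by at least n_ξ trees
    (hpay : ∀ k : ℕ, k ≠ ci (a ⟨0, hn⟩) →
      (Finset.univ.filter (fun i : Fin n => ci (a i) = k)).card ≤
        (𝔐.filter (fun B =>
          (∃ v ∈ suppF B, ci v = k) ∧ ∃ v ∈ suppF B, k < ci v)).card) :
    ∑ i ∈ Finset.univ.filter (fun i : Fin n => i ≠ ⟨0, hn⟩),
        widthSet Eall d T ((graphOf A).connectedComponentMk (a i)).supp
      ≤ c * ∑ i : Fin n, d s(a i, b i) := by
  have hsub : ∀ B ∈ 𝔐, B ⊆ Finset.univ.image fun i => s(a i, b i) := fun B hB e he => by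
    obtain ⟨i, rfl⟩ := hsubC B hB e he
    exact Finset.mem_image_of_mem _ (Finset.mem_univ i)
  have hBE : ∀ B ∈ 𝔐, B ⊆ Eall := fun B hB e he => by
    obtain ⟨i, -, rfl⟩ := Finset.mem_image.mp (hsub B hB he)
    exact hedges i
  have hcount : ∀ i ∈ Finset.univ.filter (fun i : Fin n => i ≠ ⟨0, hn⟩),
      #{j ∈ Finset.univ.filter (fun i : Fin n => i ≠ ⟨0, hn⟩) |
        (graphOf A).connectedComponentMk (a j) = (graphOf A).connectedComponentMk (a i)} ≤
      #{B ∈ 𝔐 | (graphOf A).connectedComponentMk (a i) ∈ paidNodes A B (componentIndex hci)} := by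
    intro i hi
    simp only [mk_mem_paidNodes_iff hci, SimpleGraph.ConnectedComponent.eq, ← hci]
    calc _ ≤ #{j | ci (a j) = ci (a i)} :=
          Finset.card_le_card (Finset.monotone_filter_left _ (Finset.subset_univ _))
      _ ≤ _ := hpay _ (hguard i (Finset.mem_filter.mp hi).2).ne
      _ = _ := congrArg Finset.card (Finset.filter_congr_decidable _ _ _)
  calc _ ≤ ∑ B ∈ 𝔐, ∑ t ∈ paidNodes A B (componentIndex hci), widthSet Eall d T t.supp :=
        Finset.sum_comp_le_sum_sum_of_card_fiber_le _ _ _ _ _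
          (fun t => widthSet_nonneg Eall hd T t.supp) hcount
    _ ≤ ∑ B ∈ 𝔐, c * ∑ e ∈ B, d e := Finset.sum_le_sum fun B hB =>
        sum_paidNodes_le_of_connApproxOptimal hd hopt (hBE B hB) (htree B hB) _
          (le_of_componentIndex_le hci hmono)
    _ = c * ∑ B ∈ 𝔐, ∑ e ∈ B, d e := (Finset.mul_sum _ _ _).symm
    _ ≤ c * ∑ i : Fin n, d s(a i, b i) := mul_le_mul_of_nonneg_left
        (Finset.sum_sum_le_sum_of_pairwiseDisjoint 𝔐 hdisj _ _ hsub d hd) (by linarith)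

theorem stmt16_treedecomp_to_lowerbound
    (Eall : Finset (Sym2 V)) (d : Sym2 V → ℝ) (hd : ∀ e, 0 ≤ d e)
    (T : Finset (V × V)) (A : Finset (Sym2 V)) (hAE : A ⊆ Eall)
    (hAfeas : Feasible A T)
    -- numbering of the components of `A` by nondecreasing width
    (ci : V → ℕ)
    (hci : ∀ u v : V, ci u = ci v ↔ (graphOf A).Reachable u v)
    (hmono : ∀ u v : V, ci u ≤ ci v →
      widthSet Eall d T ((graphOf A).connectedComponentMk u).supp ≤
        widthSet Eall d T ((graphOf A).connectedComponentMk v).supp)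
    (c : ℝ) (hc : 1 ≤ c)
    (hopt : ConnApproxOptimal Eall Eall d T c A)
    -- a guarded circuit `C` in `G_A`, edge i joining the components of `a i` and `b i`
    (n : ℕ) (hn : 0 < n) (a b : Fin n → V)
    (hedges : ∀ i, s(a i, b i) ∈ Eall)
    (hcross : ∀ i, ¬ (graphOf A).Reachable (a i) (b i))
    (hconsec : ∀ i : Fin n,
      (graphOf A).Reachable (b i) (a ⟨((i : ℕ) + 1) % n, Nat.mod_lt _ hn⟩))
    (hinj : Function.Injective (fun i : Fin n => s(a i, b i)))
    (hguard : ∀ i : Fin n, i ≠ ⟨0, hn⟩ → ci (a i) < ci (a ⟨0, hn⟩))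
    -- the tree packing 𝔐
    (𝔐 : Finset (Finset (Sym2 V)))
    (hdisj : ∀ B ∈ 𝔐, ∀ B' ∈ 𝔐, B ≠ B' → Disjoint B B')
    (htree : ∀ B ∈ 𝔐, IsGATree A B)
    (hsubC : ∀ B ∈ 𝔐, ∀ e ∈ B, ∃ i : Fin n, e = s(a i, b i))
    -- every node ξ other than the maximal one is paid for by at least n_ξ trees
    (hpay : ∀ k : ℕ, k ≠ ci (a ⟨0, hn⟩) →
      (Finset.univ.filter (fun i : Fin n => ci (a i) = k)).card ≤
        (𝔐.filter (fun B =>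
          (∃ v ∈ suppF B, ci v = k) ∧ ∃ v ∈ suppF B, k < ci v)).card) :
    ∑ i ∈ Finset.univ.filter (fun i : Fin n => i ≠ ⟨0, hn⟩),
        widthSet Eall d T ((graphOf A).connectedComponentMk (a i)).supp
      ≤ c * ∑ i : Fin n, d s(a i, b i) :=
  stmt16_treedecomp_to_lowerbound_general Eall d hd T A ci hci hmono c hc hopt n hn a b hedges
    hguard 𝔐 hdisj htree hsubC hpay
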